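/- Let H be a complex Hilbert space and let C, A be bounded self-adjoint operators on H with A² = 1 and (CA)² = −1/4. For real numbers λ_e, λ_n with λ_e² − λ_n² ≠ 0, set Λ_± = (∓λ_n A + λ_e)/(λ_e² − λ_n²) ± C. Then Λ₊Λ₋ = Λ₋Λ₊ = (1/(λ_e² − λ_n²) − 1/4)·Id + (λ_n/(λ_e² − λ_n²) − CA)·{C, A}, where {C, A} = CA + AC is the anticommutator. -/

import Mathlib

/-!
Writing `Λ₊ = d - X` and `Λ₋ = d + X` with the scalar `d = λ_e / (λ_e² - λ_n²)` and
`X = (λ_n / (λ_e² - λ_n²)) A - C`, both products equal `d² - X²` because a scalar commutes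
with everything. Expanding `X²` with `A² = 1` and substituting `C² = CA{C,A} + 1/4`, which
follows from `(CA)² = -1/4`, gives the stated form.
-/

section Algebra

variable {K R : Type*} [Field K] [Ring R] [Algebra K R]

theorem mul_self_eq_mul_mul_anticomm_sub {C A : R} {c : K} (hA2 : A * A = 1)
    (hCA : C * A * (C * A) = c • 1) : C * C = C * A * (C * A + A * C) - c • 1 := by
  rw [mul_add, hCA, show C * A * (A * C) = C * (A * A) * C by noncomm_ring, hA2, mul_one,
    add_sub_cancel_left]

theorem smul_one_mul_self_sub_mul_self_eq_anticomm {C A : R} (hA2 : A * A = 1)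
    (hCA : C * A * (C * A) = (-(1 / 4) : K) • 1) (d m : K) :
    (d • 1 : R) * (d • 1) - (m • A - C) * (m • A - C)
      = (d * d - m * m - 1 / 4) • 1 + (m • 1 - C * A) * (C * A + A * C) := by
  have hC2 := mul_self_eq_mul_mul_anticomm_sub hA2 hCA
  have hexpand : (m • A - C) * (m • A - C) = (m * m) • (A * A) - m • (A * C + C * A) + C * C := by
    simp only [sub_mul, mul_sub, smul_mul_assoc, mul_smul_comm, smul_add]
    module
  rw [hexpand, hC2, hA2, smul_mul_smul, one_mul]
  simp only [sub_mul, smul_mul_assoc, one_mul]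
  module

end Algebra

theorem Lambda_pm_product_general {H : Type*} [NormedAddCommGroup H] [InnerProductSpace ℂ H]
    (C A : H →L[ℂ] H)
    (hA2 : A * A = 1) (hCA : (C * A) * (C * A) = (-(1 / 4) : ℂ) • (1 : H →L[ℂ] H))
    (lam_e lam_n : ℝ) (h : lam_e ^ 2 - lam_n ^ 2 ≠ 0) :
    let Λp : H →L[ℂ] H :=
      ((lam_e ^ 2 - lam_n ^ 2 : ℂ))⁻¹ • ((-(lam_n : ℂ)) • A + (lam_e : ℂ) • 1) + C
    let Λm : H →L[ℂ] H :=
      ((lam_e ^ 2 - lam_n ^ 2 : ℂ))⁻¹ • ((lam_n : ℂ) • A + (lam_e : ℂ) • 1) - C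
    Λp * Λm = Λm * Λp ∧
    Λp * Λm = ((1 / (lam_e ^ 2 - lam_n ^ 2) - 1 / 4 : ℂ)) • (1 : H →L[ℂ] H)
      + (((lam_n / (lam_e ^ 2 - lam_n ^ 2) : ℂ)) • (1 : H →L[ℂ] H) - C * A) * (C * A + A * C) := by
  intro Λp Λm
  set s : ℂ := ((lam_e : ℂ) ^ 2 - (lam_n : ℂ) ^ 2)⁻¹
  set d : ℂ := s * lam_e
  set X : H →L[ℂ] H := (s * lam_n) • A - C
  have hp : Λp = d • 1 - X := by simp only [Λp, X, d]; module
  have hm : Λm = d • 1 + X := by simp only [Λm, X, d]; module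
  have hdX : Commute (d • 1 : H →L[ℂ] H) X := (Commute.one_left X).smul_left d
  have hs : d * d - s * lam_n * (s * lam_n) = s := by
    have hne : ((lam_e : ℂ) ^ 2 - (lam_n : ℂ) ^ 2) ≠ 0 := by exact_mod_cast h
    simp only [d, s]
    field_simp
  refine ⟨by rw [hp, hm, ← hdX.mul_self_sub_mul_self_eq, ← hdX.mul_self_sub_mul_self_eq'], ?_⟩
  have hs_div : (1 / ((lam_e : ℂ) ^ 2 - (lam_n : ℂ) ^ 2)) = s := one_div _
  have hsn_div : ((lam_n : ℂ) / ((lam_e : ℂ) ^ 2 - (lam_n : ℂ) ^ 2)) = s * lam_n :=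
    div_eq_inv_mul _ _
  rw [hp, hm, ← hdX.mul_self_sub_mul_self_eq', smul_one_mul_self_sub_mul_self_eq_anticomm hA2 hCA, hs,
    hs_div, hsn_div]

theorem Lambda_pm_product {H : Type*} [NormedAddCommGroup H] [InnerProductSpace ℂ H]
    [CompleteSpace H] (C A : H →L[ℂ] H) (hC : IsSelfAdjoint C) (hA : IsSelfAdjoint A)
    (hA2 : A * A = 1) (hCA : (C * A) * (C * A) = (-(1 / 4) : ℂ) • (1 : H →L[ℂ] H))
    (lam_e lam_n : ℝ) (h : lam_e ^ 2 - lam_n ^ 2 ≠ 0) :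
    let Λp : H →L[ℂ] H :=
      ((lam_e ^ 2 - lam_n ^ 2 : ℂ))⁻¹ • ((-(lam_n : ℂ)) • A + (lam_e : ℂ) • 1) + C
    let Λm : H →L[ℂ] H :=
      ((lam_e ^ 2 - lam_n ^ 2 : ℂ))⁻¹ • ((lam_n : ℂ) • A + (lam_e : ℂ) • 1) - C
    Λp * Λm = Λm * Λp ∧
    Λp * Λm = ((1 / (lam_e ^ 2 - lam_n ^ 2) - 1 / 4 : ℂ)) • (1 : H →L[ℂ] H)
      + (((lam_n / (lam_e ^ 2 - lam_n ^ 2) : ℂ)) • (1 : H →L[ℂ] H) - C * A) * (C * A + A * C) :=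
  Lambda_pm_product_general C A hA2 hCA lam_e lam_n h
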